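/- Let c∞ ∈ ℝ^N_{>0} be a complex balance equilibrium of a chemical reaction network and define D(c) := Σ_{r=1}^{R} k_r c∞^{y_r} Ψ(c^{y_r}/c∞^{y_r} ; c^{y_r'}/c∞^{y_r'}) for c ∈ ℝ^N_{>0}. Then a state c* ∈ ℝ^N_{>0} satisfies D(c*) = 0 if and only if c* is itself a complex balance equilibrium, i.e. for every complex y ∈ C, Σ_{r : y_r = y} k_r (c*)^{y_r} = Σ_{s : y_s' = y} k_s (c*)^{y_s}. -/
import Mathlib


/- STATEMENT 1: With `cinf` a strictly positive complex balance equilibrium, the entropy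
dissipation `D(c*) = ∑_r k_r cinf^{y_r} Ψ(c*^{y_r}/cinf^{y_r}; c*^{y'_r}/cinf^{y'_r})`
vanishes at a strictly positive state `c*` iff `c*` is itself a complex balance
equilibrium. -/

namespace Stmt1

noncomputable def cpow {N : ℕ} (c : Fin N → ℝ) (y : Fin N → ℕ) : ℝ :=
  ∏ i, c i ^ y i

noncomputable def Psi (x y : ℝ) : ℝ := x * Real.log (x / y) - x + y

def IsComplexBalanced {N R : ℕ} (y y' : Fin R → Fin N → ℕ) (k : Fin R → ℝ)
    (z : Fin N → ℝ) : Prop :=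
  ∀ yc : Fin N → ℕ,
    ∑ r ∈ Finset.univ.filter (fun r => y r = yc), k r * cpow z (y r) =
    ∑ s ∈ Finset.univ.filter (fun s => y' s = yc), k s * cpow z (y s)

lemma cpow_pos {N : ℕ} {c : Fin N → ℝ} (hc : ∀ i, 0 < c i) (yv : Fin N → ℕ) :
    0 < cpow c yv :=
  Finset.prod_pos fun i _ => pow_pos (hc i) _

lemma psi_nonneg {x z : ℝ} (hx : 0 < x) (hz : 0 < z) : 0 ≤ Psi x z := by
  have h := Real.log_le_sub_one_of_pos (div_pos hz hx)
  have hlog : Real.log (x / z) = - Real.log (z / x) := by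
    rw [← Real.log_inv, inv_div]
  have hxx : x * (z / x) = z := by field_simp
  unfold Psi; rw [hlog]
  nlinarith [h, hx, hxx]

lemma psi_eq_zero {x z : ℝ} (hx : 0 < x) (hz : 0 < z) (h0 : Psi x z = 0) : x = z := by
  by_contra hne
  have hne' : z / x ≠ 1 := by
    intro h1
    exact hne ((div_eq_one_iff_eq hx.ne').mp h1).symm
  have h := Real.log_lt_sub_one_of_pos (div_pos hz hx) hne'
  have hlog : Real.log (x / z) = - Real.log (z / x) := by
    rw [← Real.log_inv, inv_div]
  have hxx : x * (z / x) = z := by field_simp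
  have : 0 < Psi x z := by
    unfold Psi; rw [hlog]; nlinarith [h, hx, hxx]
  linarith

lemma sum_transfer {N R : ℕ} (y y' : Fin R → Fin N → ℕ) (w : Fin R → ℝ)
    (h : ∀ yc : Fin N → ℕ,
      ∑ r ∈ Finset.univ.filter (fun r => y r = yc), w r =
      ∑ s ∈ Finset.univ.filter (fun s => y' s = yc), w s)
    (F : (Fin N → ℕ) → ℝ) :
    ∑ r, w r * F (y r) = ∑ r, w r * F (y' r) := by
  classical
  set S : Finset (Fin N → ℕ) := Finset.univ.image y ∪ Finset.univ.image y' with hS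
  have h1 : ∀ r ∈ Finset.univ, y r ∈ S := fun r _ =>
    Finset.mem_union_left _ (Finset.mem_image_of_mem y (Finset.mem_univ r))
  have h2 : ∀ r ∈ Finset.univ, y' r ∈ S := fun r _ =>
    Finset.mem_union_right _ (Finset.mem_image_of_mem y' (Finset.mem_univ r))
  rw [← Finset.sum_fiberwise_of_maps_to h1 (fun r => w r * F (y r)),
      ← Finset.sum_fiberwise_of_maps_to h2 (fun r => w r * F (y' r))]
  refine Finset.sum_congr rfl fun yc _ => ?_
  have e1 : ∑ r ∈ Finset.univ.filter (fun r => y r = yc), w r * F (y r)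
      = (∑ r ∈ Finset.univ.filter (fun r => y r = yc), w r) * F yc := by
    rw [Finset.sum_mul]
    exact Finset.sum_congr rfl fun r hr => by rw [(Finset.mem_filter.mp hr).2]
  have e2 : ∑ r ∈ Finset.univ.filter (fun r => y' r = yc), w r * F (y' r)
      = (∑ r ∈ Finset.univ.filter (fun r => y' r = yc), w r) * F yc := by
    rw [Finset.sum_mul]
    exact Finset.sum_congr rfl fun r hr => by rw [(Finset.mem_filter.mp hr).2]
  rw [e1, e2, h yc]

theorem dissipation_zero_iff_complexBalanced {N R : ℕ} (y y' : Fin R → Fin N → ℕ)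
    (k : Fin R → ℝ) (hk : ∀ r, 0 < k r)
    (cinf : Fin N → ℝ) (hcinf : ∀ i, 0 < cinf i)
    (hbal : IsComplexBalanced y y' k cinf)
    (cstar : Fin N → ℝ) (hstar : ∀ i, 0 < cstar i) :
    (∑ r, k r * cpow cinf (y r) *
        Psi (cpow cstar (y r) / cpow cinf (y r)) (cpow cstar (y' r) / cpow cinf (y' r)) = 0)
      ↔ IsComplexBalanced y y' k cstar := by
  classical
  set μ : (Fin N → ℕ) → ℝ := fun yc => cpow cstar yc / cpow cinf yc with hμ
  have hμpos : ∀ yc, 0 < μ yc := fun yc =>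
    div_pos (cpow_pos hstar yc) (cpow_pos hcinf yc)
  have hμmul : ∀ yc, cpow cinf yc * μ yc = cpow cstar yc := fun yc => by
    rw [hμ, mul_comm, div_mul_cancel₀ _ (cpow_pos hcinf yc).ne']
  constructor
  · -- forward
    intro hD
    have hterm : ∀ r ∈ Finset.univ, (0:ℝ) ≤ k r * cpow cinf (y r) *
        Psi (cpow cstar (y r) / cpow cinf (y r)) (cpow cstar (y' r) / cpow cinf (y' r)) :=
      fun r _ => mul_nonneg (mul_nonneg (hk r).le (cpow_pos hcinf (y r)).le)
        (psi_nonneg (hμpos (y r)) (hμpos (y' r)))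
    have hzero := (Finset.sum_eq_zero_iff_of_nonneg hterm).mp hD
    have heq : ∀ r, μ (y r) = μ (y' r) := by
      intro r
      have h0 := hzero r (Finset.mem_univ r)
      have hpos : 0 < k r * cpow cinf (y r) := mul_pos (hk r) (cpow_pos hcinf (y r))
      have hpsi : Psi (cpow cstar (y r) / cpow cinf (y r))
          (cpow cstar (y' r) / cpow cinf (y' r)) = 0 := by
        rcases mul_eq_zero.mp h0 with h | h
        · exact absurd h hpos.ne'
        · exact h
      exact psi_eq_zero (hμpos (y r)) (hμpos (y' r)) hpsi
    intro yc
    have l1 : ∑ r ∈ Finset.univ.filter (fun r => y r = yc), k r * cpow cstar (y r)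
        = (∑ r ∈ Finset.univ.filter (fun r => y r = yc), k r * cpow cinf (y r)) * μ yc := by
      rw [Finset.sum_mul]
      refine Finset.sum_congr rfl fun r hr => ?_
      have hy := (Finset.mem_filter.mp hr).2
      rw [hy, mul_assoc, hμmul]
    have l2 : ∑ s ∈ Finset.univ.filter (fun s => y' s = yc), k s * cpow cstar (y s)
        = (∑ s ∈ Finset.univ.filter (fun s => y' s = yc), k s * cpow cinf (y s)) * μ yc := by
      rw [Finset.sum_mul]
      refine Finset.sum_congr rfl fun s hs => ?_
      have hy := (Finset.mem_filter.mp hs).2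
      rw [← hy, ← heq s, mul_assoc, hμmul]
    rw [l1, l2, hbal yc]
  · -- backward
    intro hcb
    set L : (Fin N → ℕ) → ℝ := fun yc => Real.log (μ yc) with hL
    have expand : ∀ r, k r * cpow cinf (y r) *
        Psi (cpow cstar (y r) / cpow cinf (y r)) (cpow cstar (y' r) / cpow cinf (y' r))
        = (k r * cpow cstar (y r)) * L (y r) - (k r * cpow cstar (y r)) * L (y' r)
          - (k r * cpow cinf (y r)) * μ (y r) + (k r * cpow cinf (y r)) * μ (y' r) := by
      intro r
      have hlog : Real.log (μ (y r) / μ (y' r)) = L (y r) - L (y' r) :=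
        Real.log_div (hμpos (y r)).ne' (hμpos (y' r)).ne'
      have hm : k r * cpow cinf (y r) * μ (y r) = k r * cpow cstar (y r) := by
        rw [mul_assoc, hμmul]
      show k r * cpow cinf (y r) * Psi (μ (y r)) (μ (y' r)) = _
      unfold Psi
      rw [hlog]
      linear_combination (L (y r) - L (y' r)) * hm
    rw [Finset.sum_congr rfl (fun r _ => expand r)]
    have s1 : ∑ r, (k r * cpow cstar (y r)) * L (y r)
        = ∑ r, (k r * cpow cstar (y r)) * L (y' r) :=
      sum_transfer y y' _ hcb L
    have s2 : ∑ r, (k r * cpow cinf (y r)) * μ (y r)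
        = ∑ r, (k r * cpow cinf (y r)) * μ (y' r) :=
      sum_transfer y y' _ hbal μ
    simp only [Finset.sum_add_distrib, Finset.sum_sub_distrib]
    linarith [s1, s2]

end Stmt1
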